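/- Let α₁ ∈ ℝ, α₂ > 0, ε > 0 and β ∈ ℝ, and suppose α₁ > 2 + ε and 0 < β < 8 + ε. Then the open first quadrant {z ∈ ℂ : Re z > 0 and Im z > 0} contains precisely 1 root of the polynomial Q (counted with multiplicity). -/

import Mathlib

open Polynomial in
/-- The quartic `Q(z) = z⁴ + (4z/(β+ε))·[(2+ε)(z²+1) + (α₁ − iα₂)(z²−1)]
+ 2((16−β+3ε)/(β+ε))z² + 1` as a polynomial over ℂ. -/
noncomputable def QP (a1 a2 e b : ℝ) : Polynomial ℂ :=
  X ^ 4
    + C ((4 : ℂ) / ((b : ℂ) + (e : ℂ)))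
        * (X * (C ((2 : ℂ) + (e : ℂ)) * (X ^ 2 + 1)
            + C ((a1 : ℂ) - Complex.I * (a2 : ℂ)) * (X ^ 2 - 1)))
    + C (2 * (((16 : ℂ) - (b : ℂ) + 3 * (e : ℂ)) / ((b : ℂ) + (e : ℂ)))) * X ^ 2 + 1

open Complex Filter Multiset Polynomial Real Topology

/-!
Let `s` be a multiset of complex numbers of even size such that `∏_{z ∈ s} (x - z)` lies in the
slit plane for every real `x`. Then the continuous function `x ↦ ∑_{z ∈ s} arg (x - z)` never
equals `±π`, since its exponential is the direction of that product. It tends to `0` at `+∞` and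
to `(#s - 2k)π` at `-∞`, where `k` counts the points of `s` in the upper half-plane; as `#s - 2k`
is even, the intermediate value theorem forces `#s = 2k`.

Apply this to the roots of `Q`, to the roots multiplied by `i` (the product is `Q(-ix)`) and to
the squares of the roots (the product is `Q(w) Q(-w)` with `w² = x`); the hypotheses reduce to
sign checks of `(β + ε) Q` on the real and imaginary axes. Hence two of the four roots lie in the
upper half-plane, two in the right half-plane and two in the first or third quadrant, and adding
the three counts gives `4 + 2 · #(first quadrant) = 6`.
-/

lemma Multiset.prod_eq_norm_mul_exp_sum_arg (t : Multiset ℂ) :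
    t.prod = ‖t.prod‖ * exp ((t.map arg).sum * I) := by
  induction t using Multiset.induction_on with
  | empty => simp
  | cons a t ih =>
    rw [Multiset.prod_cons, Multiset.map_cons, Multiset.sum_cons, norm_mul]
    conv_lhs => rw [ih, ← norm_mul_exp_arg_mul_I a]
    push_cast
    rw [add_mul, Complex.exp_add]
    ring

lemma Multiset.sum_arg_ne_pi_of_prod_mem_slitPlane {t : Multiset ℂ} (ht : t.prod ∈ slitPlane) :
    (t.map arg).sum ≠ π ∧ (t.map arg).sum ≠ -π := by
  have key : ∀ θ : ℝ, exp (θ * I) = -1 → (t.map arg).sum ≠ θ := by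
    rintro θ hθ hsum
    rw [t.prod_eq_norm_mul_exp_sum_arg, hsum, hθ, mul_neg_one] at ht
    exact absurd (neg_ofReal_mem_slitPlane.mp ht) (norm_nonneg _).not_gt
  exact ⟨key π exp_pi_mul_I, key (-π) (by rw [ofReal_neg, neg_mul]; exact exp_neg_pi_mul_I)⟩

lemma tendsto_arg_ofReal_sub_atTop (z : ℂ) :
    Tendsto (fun x : ℝ => arg (x - z)) atTop (𝓝 0) := by
  have hlim : Tendsto (fun x : ℝ => 1 - z / x) atTop (𝓝 1) := by
    have : Tendsto (fun x : ℝ => z / x) atTop (𝓝 0) := by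
      simpa [div_eq_mul_inv] using
        ((continuous_ofReal.tendsto 0).comp tendsto_inv_atTop_zero).const_mul z
    simpa using this.const_sub 1
  have := ((continuousAt_arg (by simp : (1 : ℂ) ∈ slitPlane)).tendsto.comp hlim)
  rw [arg_one] at this
  refine this.congr' ?_
  filter_upwards [eventually_gt_atTop 0] with x hx
  have hx' : (x : ℂ) ≠ 0 := by exact_mod_cast hx.ne'
  rw [Function.comp_apply, ← arg_real_mul (1 - z / x) hx]
  congr 1
  field_simp

lemma tendsto_arg_ofReal_sub_atBot {z : ℂ} (hz : z.im ≠ 0) :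
    Tendsto (fun x : ℝ => arg (x - z)) atBot (𝓝 (if 0 < z.im then -π else π)) := by
  have hlim : Tendsto (fun x : ℝ => -1 + z / x) atBot (𝓝 (-1)) := by
    have : Tendsto (fun x : ℝ => z / x) atBot (𝓝 0) := by
      simpa [div_eq_mul_inv] using
        ((continuous_ofReal.tendsto 0).comp tendsto_inv_atBot_zero).const_mul z
    simpa using this.const_add (-1)
  have hrescale : ∀ᶠ x : ℝ in atBot, arg (x - z) = arg (-1 + z / x) := by
    filter_upwards [eventually_lt_atBot 0] with x hx
    have hx' : (x : ℂ) ≠ 0 := by exact_mod_cast hx.ne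
    rw [← arg_real_mul (-1 + z / x) (neg_pos.mpr hx)]
    congr 1
    push_cast
    field_simp
    ring
  have him : ∀ x : ℝ, (-1 + z / x).im = z.im / x := by
    intro x; simp [div_ofReal_im]
  refine Tendsto.congr' (EventuallyEq.symm hrescale) ?_
  -- `arg` is only one-sidedly continuous at `-1`; the side is fixed by the sign of `z.im`.
  split_ifs with h
  · refine (tendsto_arg_nhdsWithin_im_neg_of_re_neg_of_im_zero (z := -1) (by norm_num)
      (by simp)).comp ?_
    refine tendsto_nhdsWithin_iff.mpr ⟨hlim, ?_⟩
    filter_upwards [eventually_lt_atBot 0] with x hx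
    simp only [him]
    exact div_neg_of_pos_of_neg h hx
  · have h' : z.im < 0 := lt_of_le_of_ne (not_lt.mp h) hz
    refine (tendsto_arg_nhdsWithin_im_nonneg_of_re_neg_of_im_zero (z := -1) (by norm_num)
      (by simp)).comp ?_
    refine tendsto_nhdsWithin_iff.mpr ⟨hlim, ?_⟩
    filter_upwards [eventually_lt_atBot 0] with x hx
    simp only [him]
    exact (div_pos_of_neg_of_neg h' hx).le

lemma continuous_arg_ofReal_sub {z : ℂ} (hz : z.im ≠ 0) :
    Continuous fun x : ℝ => arg (x - z) :=
  continuous_iff_continuousAt.mpr fun x =>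
    (continuousAt_arg (mem_slitPlane_iff.mpr (Or.inr (by simpa using hz)))).comp
      (continuous_ofReal.sub continuous_const).continuousAt

theorem mem_range_of_tendsto_of_lt_of_lt {X α : Type*} [TopologicalSpace X] [PreconnectedSpace X]
    [LinearOrder α] [TopologicalSpace α] [OrderTopology α] {f : X → α} {l₁ l₂ : Filter X}
    [l₁.NeBot] [l₂.NeBot] {a b c : α} (hf : Continuous f) (ha : Tendsto f l₁ (𝓝 a))
    (hb : Tendsto f l₂ (𝓝 b)) (hac : a < c) (hcb : c < b) : c ∈ Set.range f :=
  mem_range_of_exists_le_of_exists_ge hf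
    ((ha.eventually (gt_mem_nhds hac)).exists.imp fun _ => le_of_lt)
    ((hb.eventually (lt_mem_nhds hcb)).exists.imp fun _ => le_of_lt)

lemma Multiset.sum_map_ite_im_pos (s : Multiset ℂ) :
    (s.map fun z => if 0 < z.im then -π else π).sum =
      (card s - 2 * card (s.filter fun z => 0 < z.im)) * π := by
  induction s using Multiset.induction_on with
  | empty => simp
  | cons a t ih => by_cases h : 0 < a.im <;> simp [h, ih] <;> ring

lemma Multiset.im_ne_zero_of_prod_sub_mem_slitPlane {s : Multiset ℂ}
    (h : ∀ x : ℝ, (s.map fun z => (x : ℂ) - z).prod ∈ slitPlane) {z : ℂ} (hz : z ∈ s) :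
    z.im ≠ 0 := by
  intro him
  have hzero : (z.re : ℂ) - z = 0 := by apply Complex.ext <;> simp [him]
  have := h z.re
  rw [Multiset.prod_eq_zero (hzero ▸ Multiset.mem_map_of_mem _ hz)] at this
  exact slitPlane_ne_zero this rfl

theorem Multiset.card_eq_two_mul_card_filter_im_pos {s : Multiset ℂ} (hs : Even (card s))
    (h : ∀ x : ℝ, (s.map fun z => (x : ℂ) - z).prod ∈ slitPlane) :
    card s = 2 * card (s.filter fun z => 0 < z.im) := by
  have him := fun z hz => s.im_ne_zero_of_prod_sub_mem_slitPlane h (z := z) hz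
  set f : ℝ → ℝ := fun x => (s.map fun z => arg (x - z)).sum with hf
  have hcont : Continuous f :=
    continuous_multiset_sum _ fun z hz => continuous_arg_ofReal_sub (him z hz)
  have hpi : ∀ x, f x ≠ π ∧ f x ≠ -π := fun x => by
    simpa [hf, Multiset.map_map, Function.comp_def] using
      Multiset.sum_arg_ne_pi_of_prod_mem_slitPlane (h x)
  have htop : Tendsto f atTop (𝓝 0) := by
    simpa using tendsto_multiset_sum s fun z _ => tendsto_arg_ofReal_sub_atTop z
  have hbot : Tendsto f atBot (𝓝 ((card s - 2 * card (s.filter fun z => 0 < z.im)) * π)) := by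
    rw [← Multiset.sum_map_ite_im_pos]
    exact tendsto_multiset_sum s fun z hz => tendsto_arg_ofReal_sub_atBot (him z hz)
  by_contra hne
  obtain ⟨m, hm⟩ := hs
  have : (card s : ℤ) - 2 * card (s.filter fun z => 0 < z.im) ≥ 2 ∨
      (card s : ℤ) - 2 * card (s.filter fun z => 0 < z.im) ≤ -2 := by omega
  rcases this with hge | hle
  · have hge' : (2 : ℝ) ≤ card s - 2 * card (s.filter fun z => 0 < z.im) := by
      exact_mod_cast hge
    obtain ⟨x, hx⟩ :=
      mem_range_of_tendsto_of_lt_of_lt hcont htop hbot pi_pos (by nlinarith [pi_pos])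
    exact (hpi x).1 hx
  · have hle' : (card s : ℝ) - 2 * card (s.filter fun z => 0 < z.im) ≤ -2 := by
      exact_mod_cast hle
    obtain ⟨x, hx⟩ := mem_range_of_tendsto_of_lt_of_lt hcont hbot htop (by nlinarith [pi_pos])
      (neg_lt_zero.mpr pi_pos)
    exact (hpi x).2 hx

lemma Multiset.card_filter_im_pos_add_card_filter_re_pos_add_card_filter_re_mul_im_pos
    {s : Multiset ℂ} (hs : ∀ z ∈ s, z.re ≠ 0 ∧ z.im ≠ 0) :
    card (s.filter fun z => 0 < z.im) + card (s.filter fun z => 0 < z.re) +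
        card (s.filter fun z => 0 < z.re * z.im) =
      card s + 2 * card (s.filter fun z => 0 < z.re ∧ 0 < z.im) := by
  induction s using Multiset.induction_on with
  | empty => simp
  | cons a t ih =>
    have ih := ih fun z hz => hs z (Multiset.mem_cons_of_mem hz)
    obtain ⟨hre, him⟩ := hs a (Multiset.mem_cons_self a t)
    rcases hre.lt_or_gt with hr | hr <;> rcases him.lt_or_gt with hi | hi
    · simp [hr.not_gt, hi.not_gt, mul_pos_of_neg_of_neg hr hi]; omega
    · simp [hr.not_gt, hi, (mul_neg_of_neg_of_pos hr hi).not_gt]; omega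
    · simp [hr, hi.not_gt, (mul_neg_of_pos_of_neg hr hi).not_gt]; omega
    · simp [hr, hi, mul_pos hr hi]; omega

lemma Multiset.card_filter_re_pos_eq_card_filter_im_pos_map_I_mul (s : Multiset ℂ) :
    card (s.filter fun z => 0 < z.re) = card ((s.map (I * ·)).filter fun z => 0 < z.im) := by
  simp [Multiset.filter_map]

lemma Multiset.card_filter_re_mul_im_pos_eq_card_filter_im_pos_map_sq (s : Multiset ℂ) :
    card (s.filter fun z => 0 < z.re * z.im) =
      card ((s.map (· ^ 2)).filter fun z => 0 < z.im) := by
  simp only [Multiset.filter_map, Multiset.card_map, Function.comp_def, sq, mul_im]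
  congr 1
  refine Multiset.filter_congr fun z _ => ?_
  constructor <;> intro h <;> linarith

lemma Multiset.prod_map_sub_mul (s : Multiset ℂ) (c w : ℂ) :
    (s.map fun z => c * w - c * z).prod = c ^ card s * (s.map (w - ·)).prod := by
  rw [← Multiset.prod_replicate, ← Multiset.map_const', ← Multiset.prod_map_mul]
  simp only [mul_sub]

lemma Multiset.prod_map_sq_sub_sq (s : Multiset ℂ) (w : ℂ) :
    (s.map fun z => w ^ 2 - z ^ 2).prod =
      (-1) ^ card s * ((s.map (w - ·)).prod * (s.map (-w - ·)).prod) := by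
  rw [← Multiset.prod_map_mul, ← Multiset.prod_replicate (card s) (-1 : ℂ),
    ← Multiset.map_const', ← Multiset.prod_map_mul]
  congr 1
  exact Multiset.map_congr rfl fun z _ => by ring

lemma ofReal_mul_mem_slitPlane_iff {k : ℝ} (hk : 0 < k) {z : ℂ} :
    (k : ℂ) * z ∈ slitPlane ↔ z ∈ slitPlane := by
  simp [mem_slitPlane_iff, mul_pos_iff_of_pos_left hk, hk.ne']

noncomputable def clearedQ (a1 a2 e b : ℝ) (w : ℂ) : ℂ :=
  (b + e) * w ^ 4 + 4 * (w * ((2 + e) * (w ^ 2 + 1) + (a1 - I * a2) * (w ^ 2 - 1)))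
    + 2 * (16 - b + 3 * e) * w ^ 2 + (b + e)

section Quartic

variable {a1 a2 e b : ℝ}

lemma QP_monic : (QP a1 a2 e b).Monic := by
  unfold QP
  monicity!

lemma card_roots_QP : card (QP a1 a2 e b).roots = 4 := by
  rw [IsAlgClosed.card_roots_eq_natDegree]
  unfold QP
  compute_degree!

lemma eval_QP_eq_prod_roots (x : ℂ) :
    (QP a1 a2 e b).eval x = ((QP a1 a2 e b).roots.map (x - ·)).prod :=
  (IsAlgClosed.splits _).eval_eq_prod_roots_of_monic QP_monic x

lemma ofReal_add_mul_eval_QP (hbe : b + e ≠ 0) (w : ℂ) :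
    ((b + e : ℝ) : ℂ) * (QP a1 a2 e b).eval w = clearedQ a1 a2 e b w := by
  have hbe' : (b : ℂ) + e ≠ 0 := by exact_mod_cast hbe
  simp only [QP, clearedQ, eval_add, eval_sub, eval_mul, eval_pow, eval_X, eval_C, eval_one]
  push_cast
  field_simp


lemma clearedQ_ofReal_mem_slitPlane (ha2 : 0 < a2) (he : 0 < e) (hbe : 0 < b + e) (x : ℝ) :
    clearedQ a1 a2 e b x ∈ slitPlane := by
  have him : (clearedQ a1 a2 e b x).im = -4 * a2 * (x * (x ^ 2 - 1)) := by
    simp [clearedQ, pow_succ]; ring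
  have hre : (clearedQ a1 a2 e b x).re =
      (b + e) * x ^ 4 + 4 * x * ((2 + e) * (x ^ 2 + 1) + a1 * (x ^ 2 - 1))
        + 2 * (16 - b + 3 * e) * x ^ 2 + (b + e) := by
    simp [clearedQ, pow_succ]; ring
  rw [mem_slitPlane_iff, him, hre]
  by_cases hx : x * (x ^ 2 - 1) = 0
  · left
    rcases mul_eq_zero.mp hx with h | h
    · subst h; simpa using hbe
    · have h1 : x ^ 2 = 1 := by linarith
      have h2 : x ^ 4 = 1 := by nlinarith
      rw [h1, h2]
      nlinarith [sq_nonneg (x + 1)]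
  · exact Or.inr (mul_ne_zero (by simpa using ha2.ne') hx)

lemma clearedQ_neg_I_mul_ofReal_mem_slitPlane (he : 0 < e) (ha1 : 2 + e < a1) (hbe : 0 < b + e)
    (x : ℝ) : clearedQ a1 a2 e b (-I * x) ∈ slitPlane := by
  have him : (clearedQ a1 a2 e b (-I * x)).im =
      4 * x * (a1 * (1 + x ^ 2) - (2 + e) * (1 - x ^ 2)) := by
    simp [clearedQ, pow_succ]; ring
  rw [mem_slitPlane_iff, him]
  rcases eq_or_ne x 0 with rfl | hx
  · left; simpa [clearedQ] using hbe
  · have hfactor : 0 < a1 * (1 + x ^ 2) - (2 + e) * (1 - x ^ 2) := by nlinarith [sq_nonneg x]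
    exact Or.inr (mul_ne_zero (mul_ne_zero four_ne_zero hx) hfactor.ne')

lemma clearedQ_ofReal_mul_clearedQ_neg_mem_slitPlane (ha2 : 0 < a2) (he : 0 < e)
    (ha1 : 2 + e < a1) (hbe : 0 < b + e) (y : ℝ) :
    clearedQ a1 a2 e b y * clearedQ a1 a2 e b (-y) ∈ slitPlane := by
  set L : ℝ := (2 + e) * (y ^ 2 + 1) + a1 * (y ^ 2 - 1) with hL
  have him : (clearedQ a1 a2 e b y * clearedQ a1 a2 e b (-y)).im =
      32 * a2 * (y ^ 2 * ((y ^ 2 - 1) * L)) := by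
    simp [clearedQ, pow_succ, hL]; ring
  have hre : (clearedQ a1 a2 e b y * clearedQ a1 a2 e b (-y)).re =
      ((b + e) * y ^ 4 + 2 * (16 - b + 3 * e) * y ^ 2 + (b + e)) ^ 2 - 16 * y ^ 2 * L ^ 2
        + 16 * a2 ^ 2 * y ^ 2 * (y ^ 2 - 1) ^ 2 := by
    simp [clearedQ, pow_succ, hL]; ring
  rw [mem_slitPlane_iff, him, hre]
  by_cases hy : y ^ 2 * ((y ^ 2 - 1) * L) = 0
  · left
    rcases mul_eq_zero.mp hy with h | h
    · rw [pow_eq_zero_iff two_ne_zero] at h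
      subst h
      simpa using pow_pos hbe 2
    rcases mul_eq_zero.mp h with h | h
    · have h1 : y ^ 2 = 1 := by linarith
      have h2 : y ^ 4 = 1 := by nlinarith
      have hL1 : L = 2 * (2 + e) := by rw [hL, h1]; ring
      rw [hL1, h1, h2]
      nlinarith
    · have hy0 : y ≠ 0 := by rintro rfl; rw [hL] at h; linarith
      have hy1 : y ^ 2 - 1 ≠ 0 := fun h1 => by rw [hL] at h; nlinarith
      have hpos : 0 < 16 * a2 ^ 2 * y ^ 2 * (y ^ 2 - 1) ^ 2 :=
        mul_pos (mul_pos (by positivity) (pow_two_pos_of_ne_zero hy0))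
          (pow_two_pos_of_ne_zero hy1)
      rw [h]
      nlinarith [sq_nonneg ((b + e) * y ^ 4 + 2 * (16 - b + 3 * e) * y ^ 2 + (b + e))]
  · exact Or.inr (mul_ne_zero (by positivity) hy)

lemma clearedQ_I_mul_ofReal_mul_clearedQ_neg_mem_slitPlane (ha2 : 0 < a2) (he : 0 < e)
    (ha1 : 2 + e < a1) (hbe : 0 < b + e) (y : ℝ) :
    clearedQ a1 a2 e b (I * y) * clearedQ a1 a2 e b (-(I * y)) ∈ slitPlane := by
  have him : (clearedQ a1 a2 e b (I * y) * clearedQ a1 a2 e b (-(I * y))).im =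
      32 * a2 * (y ^ 2 * ((1 + y ^ 2) * ((2 + e) * (1 - y ^ 2) - a1 * (1 + y ^ 2)))) := by
    simp [clearedQ, pow_succ]; ring
  rw [mem_slitPlane_iff, him]
  rcases eq_or_ne y 0 with rfl | hy
  · left; simpa [clearedQ] using hbe.ne'
  · have hfactor : (2 + e) * (1 - y ^ 2) - a1 * (1 + y ^ 2) < 0 := by nlinarith [sq_nonneg y]
    exact Or.inr (mul_ne_zero (by positivity) (mul_ne_zero (pow_ne_zero 2 hy)
      (mul_ne_zero (by positivity) hfactor.ne)))

lemma eval_QP_mul_eval_QP_neg_mem_slitPlane {w : ℂ} (hbe : 0 < b + e)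
    (hw : clearedQ a1 a2 e b w * clearedQ a1 a2 e b (-w) ∈ slitPlane) :
    (QP a1 a2 e b).eval w * (QP a1 a2 e b).eval (-w) ∈ slitPlane := by
  rw [← ofReal_mul_mem_slitPlane_iff (pow_pos hbe 2)]
  convert hw using 1
  rw [← ofReal_add_mul_eval_QP hbe.ne', ← ofReal_add_mul_eval_QP hbe.ne']
  push_cast
  ring

lemma prod_ofReal_sub_roots_QP_mem_slitPlane (ha2 : 0 < a2) (he : 0 < e) (hbe : 0 < b + e)
    (x : ℝ) : ((QP a1 a2 e b).roots.map ((x : ℂ) - ·)).prod ∈ slitPlane := by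
  rw [← eval_QP_eq_prod_roots, ← ofReal_mul_mem_slitPlane_iff hbe,
    ofReal_add_mul_eval_QP hbe.ne']
  exact clearedQ_ofReal_mem_slitPlane ha2 he hbe x

lemma prod_ofReal_sub_I_mul_roots_QP_mem_slitPlane (he : 0 < e) (ha1 : 2 + e < a1)
    (hbe : 0 < b + e) (x : ℝ) :
    (((QP a1 a2 e b).roots.map (I * ·)).map ((x : ℂ) - ·)).prod ∈ slitPlane := by
  have hrot : (((QP a1 a2 e b).roots.map (I * ·)).map ((x : ℂ) - ·)).prod =
      (QP a1 a2 e b).eval (-I * x) :=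
    calc (((QP a1 a2 e b).roots.map (I * ·)).map ((x : ℂ) - ·)).prod
        = ((QP a1 a2 e b).roots.map fun z => I * (-I * x) - I * z).prod := by
          rw [Multiset.map_map]
          exact congrArg _ (map_congr rfl fun z _ => by
            simp only [Function.comp_apply]; linear_combination (x : ℂ) * I_sq)
      _ = I ^ card (QP a1 a2 e b).roots * ((QP a1 a2 e b).roots.map (-I * x - ·)).prod :=
          prod_map_sub_mul _ _ _
      _ = (QP a1 a2 e b).eval (-I * x) := by
          rw [card_roots_QP, I_pow_four, one_mul, eval_QP_eq_prod_roots]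
  rw [hrot, ← ofReal_mul_mem_slitPlane_iff hbe, ofReal_add_mul_eval_QP hbe.ne']
  exact clearedQ_neg_I_mul_ofReal_mem_slitPlane he ha1 hbe x

lemma prod_ofReal_sub_sq_roots_QP_mem_slitPlane (ha2 : 0 < a2) (he : 0 < e) (ha1 : 2 + e < a1)
    (hbe : 0 < b + e) (x : ℝ) :
    (((QP a1 a2 e b).roots.map (· ^ 2)).map ((x : ℂ) - ·)).prod ∈ slitPlane := by
  have hsq : ∀ w : ℂ, w ^ 2 = x →
      (((QP a1 a2 e b).roots.map (· ^ 2)).map ((x : ℂ) - ·)).prod =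
        (QP a1 a2 e b).eval w * (QP a1 a2 e b).eval (-w) := fun w hw =>
    calc (((QP a1 a2 e b).roots.map (· ^ 2)).map ((x : ℂ) - ·)).prod
        = ((QP a1 a2 e b).roots.map fun z => w ^ 2 - z ^ 2).prod := by
          rw [Multiset.map_map, hw]; rfl
      _ = (-1) ^ card (QP a1 a2 e b).roots * (((QP a1 a2 e b).roots.map (w - ·)).prod *
            ((QP a1 a2 e b).roots.map (-w - ·)).prod) := prod_map_sq_sub_sq _ _
      _ = (QP a1 a2 e b).eval w * (QP a1 a2 e b).eval (-w) := by
          rw [card_roots_QP, eval_QP_eq_prod_roots, eval_QP_eq_prod_roots]; norm_num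
  rcases le_or_gt 0 x with hx | hx
  · rw [hsq √x (by rw [← ofReal_pow, sq_sqrt hx])]
    exact eval_QP_mul_eval_QP_neg_mem_slitPlane hbe
      (clearedQ_ofReal_mul_clearedQ_neg_mem_slitPlane ha2 he ha1 hbe _)
  · have hw : (I * √(-x)) ^ 2 = x := by
      rw [mul_pow, I_sq, ← ofReal_pow, sq_sqrt (by linarith)]; push_cast; ring
    rw [hsq _ hw]
    exact eval_QP_mul_eval_QP_neg_mem_slitPlane hbe
      (clearedQ_I_mul_ofReal_mul_clearedQ_neg_mem_slitPlane ha2 he ha1 hbe _)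

end Quartic

theorem stmt_16_general (a1 a2 e b : ℝ) (ha2 : 0 < a2) (he : 0 < e)
    (ha1 : 2 + e < a1) (hb₁ : 0 < b) :
    Multiset.card ((QP a1 a2 e b).roots.filter (fun z => 0 < z.re ∧ 0 < z.im)) = 1 := by
  have hbe : 0 < b + e := by linarith
  have hS : card (QP a1 a2 e b).roots = 4 := card_roots_QP
  have heven : ∀ f : ℂ → ℂ, Even (card ((QP a1 a2 e b).roots.map f)) := fun f => by
    rw [card_map, hS]; decide
  have hA := prod_ofReal_sub_roots_QP_mem_slitPlane (a1 := a1) ha2 he hbe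
  have hB := prod_ofReal_sub_I_mul_roots_QP_mem_slitPlane (a2 := a2) he ha1 hbe
  have hC := prod_ofReal_sub_sq_roots_QP_mem_slitPlane ha2 he ha1 hbe
  have hupper := card_eq_two_mul_card_filter_im_pos (by simpa using heven id) hA
  have hright := card_eq_two_mul_card_filter_im_pos (heven _) hB
  have hdiag := card_eq_two_mul_card_filter_im_pos (heven _) hC
  rw [card_map, ← card_filter_re_pos_eq_card_filter_im_pos_map_I_mul] at hright
  rw [card_map, ← card_filter_re_mul_im_pos_eq_card_filter_im_pos_map_sq] at hdiag
  have haxes : ∀ z ∈ (QP a1 a2 e b).roots, z.re ≠ 0 ∧ z.im ≠ 0 := fun z hz =>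
    ⟨by simpa using im_ne_zero_of_prod_sub_mem_slitPlane hB (mem_map_of_mem (I * ·) hz),
      im_ne_zero_of_prod_sub_mem_slitPlane hA hz⟩
  have hcount := card_filter_im_pos_add_card_filter_re_pos_add_card_filter_re_mul_im_pos haxes
  omega

/-- If `α₁ > 2 + ε` and `0 < β < 8 + ε`, then the open first quadrant contains
precisely 1 root of `Q`, counted with multiplicity. -/
theorem stmt_16 (a1 a2 e b : ℝ) (ha2 : 0 < a2) (he : 0 < e)
    (ha1 : 2 + e < a1) (hb₁ : 0 < b) (hb₂ : b < 8 + e) :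
    Multiset.card ((QP a1 a2 e b).roots.filter (fun z => 0 < z.re ∧ 0 < z.im)) = 1 :=
  stmt_16_general a1 a2 e b ha2 he ha1 hb₁
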